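/- arXiv:2508.05437 — 3 statements merged into one kernel-verified Lean document; each statement's English description precedes it below -/
import Mathlib

section
/- For a directed graph G with semi-double cover H, and any two disjoint subsets A, B of the vertices of G, the flow ratio f_G(A,B) = 1 - \overline{\phi}_G(A,B) equals the conductance \phi_H(A_1 \cup B_2) in H, where A_1 = {v_1 : v \in A} and B_2 = {v_2 : v \in B}. -/
/-!
Index the vertex sets of the cover as `S₁ ∪ T₂ = S.disjSum T`. Since every edge of the cover joins
the first copy to the second, the weight between `A₁ ∪ B₂` and `S₁ ∪ T₂` is
`w(A, T) + w(S, B)`. Taking `S = T = V` gives `vol_H(A₁ ∪ B₂) = vol_out(A) + vol_in(B)`, and taking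
`S = Aᶜ`, `T = Bᶜ` gives the cut `w(A, Bᶜ) + w(Aᶜ, B) = vol_out(A) + vol_in(B) - 2 w(A, B)`.
-/

open Finset

/-- Weight function of the semi-double cover of a directed weighted graph:
each directed edge `(u,v)` of weight `w u v` becomes the undirected edge
`{u₁, v₂}` of the same weight. -/
def coverW {V : Type*} (w : V → V → ℝ) : V ⊕ V → V ⊕ V → ℝ
  | Sum.inl u, Sum.inr v => w u v
  | Sum.inr v, Sum.inl u => w u v
  | _, _ => 0

namespace Finset

variable {α β : Type*}

theorem image_inl_union_image_inr [DecidableEq α] [DecidableEq β] (s : Finset α)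
    (t : Finset β) : s.image Sum.inl ∪ t.image Sum.inr = s.disjSum t := by
  ext x
  cases x <;> simp

theorem compl_disjSum [Fintype α] [Fintype β] [DecidableEq α] [DecidableEq β]
    (s : Finset α) (t : Finset β) : (s.disjSum t)ᶜ = sᶜ.disjSum tᶜ := by
  ext x
  cases x <;> simp

end Finset

section CoverWeight

variable {V : Type*} (w : V → V → ℝ)

theorem sum_disjSum_coverW_inl (u : V) (S T : Finset V) :
    ∑ b ∈ S.disjSum T, coverW w (.inl u) b = ∑ v ∈ T, w u v := by
  simp [sum_disjSum, coverW]

theorem sum_disjSum_coverW_inr (v : V) (S T : Finset V) :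
    ∑ b ∈ S.disjSum T, coverW w (.inr v) b = ∑ u ∈ S, w u v := by
  simp [sum_disjSum, coverW]

theorem sum_disjSum_disjSum_coverW (A B S T : Finset V) :
    ∑ a ∈ A.disjSum B, ∑ b ∈ S.disjSum T, coverW w a b =
      ∑ u ∈ A, ∑ v ∈ T, w u v + ∑ v ∈ B, ∑ u ∈ S, w u v := by
  rw [sum_disjSum]
  simp only [sum_disjSum_coverW_inl, sum_disjSum_coverW_inr]

variable [Fintype V]

theorem sum_disjSum_univ_coverW (A B : Finset V) :
    ∑ a ∈ A.disjSum B, ∑ b, coverW w a b = ∑ u ∈ A, ∑ v, w u v + ∑ v ∈ B, ∑ u, w u v := by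
  rw [← univ_disjSum_univ]
  exact sum_disjSum_disjSum_coverW w A B univ univ

theorem sum_disjSum_compl_coverW [DecidableEq V] (A B : Finset V) :
    ∑ a ∈ A.disjSum B, ∑ b ∈ (A.disjSum B)ᶜ, coverW w a b =
      ∑ u ∈ A, ∑ v, w u v + ∑ v ∈ B, ∑ u, w u v - 2 * ∑ u ∈ A, ∑ v ∈ B, w u v := by
  have out_compl : ∀ u, ∑ v ∈ Bᶜ, w u v = ∑ v, w u v - ∑ v ∈ B, w u v := fun u =>
    eq_sub_of_add_eq (sum_compl_add_sum B _)
  have in_compl : ∀ v, ∑ u ∈ Aᶜ, w u v = ∑ u, w u v - ∑ u ∈ A, w u v := fun v =>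
    eq_sub_of_add_eq (sum_compl_add_sum A _)
  rw [compl_disjSum, sum_disjSum_disjSum_coverW]
  simp only [out_compl, in_compl, sum_sub_distrib]
  rw [sum_comm (s := B) (t := A)]
  ring

end CoverWeight

theorem flow_ratio_eq_cover_conductance_general
    {V : Type*} [Fintype V] [DecidableEq V]
    (w : V → V → ℝ)
    (A B : Finset V)
    (hvol : 0 < (∑ u ∈ A, ∑ v, w u v) + ∑ v ∈ B, ∑ u, w u v) :
    1 - 2 * (∑ u ∈ A, ∑ v ∈ B, w u v) /
        ((∑ u ∈ A, ∑ v, w u v) + ∑ v ∈ B, ∑ u, w u v) =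
      (∑ a ∈ A.image Sum.inl ∪ B.image Sum.inr,
          ∑ b ∈ (A.image Sum.inl ∪ B.image Sum.inr)ᶜ, coverW w a b) /
        (∑ a ∈ A.image Sum.inl ∪ B.image Sum.inr, ∑ b, coverW w a b) := by
  rw [image_inl_union_image_inr, sum_disjSum_compl_coverW, sum_disjSum_univ_coverW, sub_div,
    div_self hvol.ne']

/-- For a directed graph `G` (with nonnegative weights `w`) and disjoint nonempty
vertex sets `A, B`, the flow ratio `f_G(A,B) = 1 - \overline{φ}_G(A,B)` equals the
conductance `φ_H(A₁ ∪ B₂)` in the semi-double cover `H`. -/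
theorem flow_ratio_eq_cover_conductance
    {V : Type*} [Fintype V] [DecidableEq V]
    (w : V → V → ℝ) (hw : ∀ u v, 0 ≤ w u v)
    (A B : Finset V) (hAB : Disjoint A B) (hA : A.Nonempty) (hB : B.Nonempty)
    (hvol : 0 < (∑ u ∈ A, ∑ v, w u v) + ∑ v ∈ B, ∑ u, w u v) :
    1 - 2 * (∑ u ∈ A, ∑ v ∈ B, w u v) /
        ((∑ u ∈ A, ∑ v, w u v) + ∑ v ∈ B, ∑ u, w u v) =
      (∑ a ∈ A.image Sum.inl ∪ B.image Sum.inr,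
          ∑ b ∈ (A.image Sum.inl ∪ B.image Sum.inr)ᶜ, coverW w a b) /
        (∑ a ∈ A.image Sum.inl ∪ B.image Sum.inr, ∑ b, coverW w a b) :=
  flow_ratio_eq_cover_conductance_general w A B hvol
end

section
/- For a directed graph G with semi-double cover H, and any simple set S \subseteq V_H (i.e., |{v_1, v_2} \cap S| \le 1 for all v), setting A = {u : u_1 \in S} and B = {u : u_2 \in S}, it holds that f_G(A,B) = \phi_H(S). -/
open Finset

/-- A subset `S` of the vertex set of the semi-double cover is simple if it
contains at most one of `v₁, v₂` for every vertex `v` of `G`. -/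
def SimpleSet {V : Type*} (S : Finset (V ⊕ V)) : Prop :=
  ∀ v : V, ¬(Sum.inl v ∈ S ∧ Sum.inr v ∈ S)

/-!
Every edge `(u, v)` of `G` becomes the edge `{u₁, v₂}` of `H`. Hence the volume of `S` in `H`
is `vol_out(A) + vol_in(B)`, and the weight of the edges inside `S` counts every edge from `A`
to `B` once from each endpoint, i.e. it is `2 w_G(A, B)`. The cut of `S` is the difference of
the two, which turns `φ_H(S)` into `1 - 2 w_G(A, B) / (vol_out(A) + vol_in(B))`.
-/

section CoverWeight

variable {V : Type*} (w : V → V → ℝ)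

@[simp] lemma coverW_inl_inr (u v : V) : coverW w (.inl u) (.inr v) = w u v := rfl

@[simp] lemma coverW_inr_inl (u v : V) : coverW w (.inr v) (.inl u) = w u v := rfl

@[simp] lemma coverW_inl_inl (u v : V) : coverW w (.inl u) (.inl v) = 0 := rfl

@[simp] lemma coverW_inr_inr (u v : V) : coverW w (.inr u) (.inr v) = 0 := rfl

lemma sum_sum_coverW (S T : Finset (V ⊕ V)) :
    ∑ a ∈ S, ∑ b ∈ T, coverW w a b =
      ∑ u ∈ S.toLeft, ∑ v ∈ T.toRight, w u v + ∑ v ∈ S.toRight, ∑ u ∈ T.toLeft, w u v := by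
  simp [sum_sum_eq_sum_toLeft_add_sum_toRight]

lemma sum_sum_coverW_univ [Fintype V] (S : Finset (V ⊕ V)) :
    ∑ a ∈ S, ∑ b, coverW w a b = ∑ u ∈ S.toLeft, ∑ v, w u v + ∑ v ∈ S.toRight, ∑ u, w u v := by
  simpa using sum_sum_coverW w S univ

lemma sum_sum_coverW_self (S : Finset (V ⊕ V)) :
    ∑ a ∈ S, ∑ b ∈ S, coverW w a b = 2 * ∑ u ∈ S.toLeft, ∑ v ∈ S.toRight, w u v := by
  rw [sum_sum_coverW, sum_comm (s := S.toRight), two_mul]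

end CoverWeight

lemma sum_sum_compl_eq_sub {α R : Type*} [Fintype α] [DecidableEq α] [AddCommGroup R]
    (S : Finset α) (f : α → α → R) :
    ∑ a ∈ S, ∑ b ∈ Sᶜ, f a b = ∑ a ∈ S, ∑ b, f a b - ∑ a ∈ S, ∑ b ∈ S, f a b := by
  rw [← sum_sub_distrib]
  exact sum_congr rfl fun a _ => eq_sub_of_add_eq (sum_compl_add_sum S (f a))

lemma filter_inl_mem_eq_toLeft {α β : Type*} [Fintype α] [DecidableEq α] [DecidableEq β]
    (S : Finset (α ⊕ β)) :
    univ.filter (fun a => Sum.inl a ∈ S) = S.toLeft := by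
  ext; simp

lemma filter_inr_mem_eq_toRight {α β : Type*} [Fintype β] [DecidableEq α] [DecidableEq β]
    (S : Finset (α ⊕ β)) :
    univ.filter (fun b => Sum.inr b ∈ S) = S.toRight := by
  ext; simp

theorem flow_ratio_of_simple_set_general
    {V : Type*} [Fintype V] [DecidableEq V]
    (w : V → V → ℝ)
    (S : Finset (V ⊕ V))
    (hvol : 0 < ∑ a ∈ S, ∑ b, coverW w a b) :
    1 - 2 * (∑ u ∈ Finset.univ.filter (fun u => Sum.inl u ∈ S),
               ∑ v ∈ Finset.univ.filter (fun v => Sum.inr v ∈ S), w u v) /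
        ((∑ u ∈ Finset.univ.filter (fun u => Sum.inl u ∈ S), ∑ v, w u v) +
          ∑ v ∈ Finset.univ.filter (fun v => Sum.inr v ∈ S), ∑ u, w u v) =
      (∑ a ∈ S, ∑ b ∈ Sᶜ, coverW w a b) / (∑ a ∈ S, ∑ b, coverW w a b) := by
  rw [sum_sum_coverW_univ] at hvol
  rw [filter_inl_mem_eq_toLeft, filter_inr_mem_eq_toRight, sum_sum_compl_eq_sub,
    sum_sum_coverW_self, sum_sum_coverW_univ]
  field_simp

/-- For a directed graph `G` with semi-double cover `H` and a simple set `S ⊆ V_H`,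
setting `A = {u : u₁ ∈ S}` and `B = {u : u₂ ∈ S}`, the flow ratio `f_G(A,B)`
equals the conductance `φ_H(S)`. -/
theorem flow_ratio_of_simple_set
    {V : Type*} [Fintype V] [DecidableEq V]
    (w : V → V → ℝ) (hw : ∀ u v, 0 ≤ w u v)
    (S : Finset (V ⊕ V)) (hS : SimpleSet S)
    (hvol : 0 < ∑ a ∈ S, ∑ b, coverW w a b) :
    1 - 2 * (∑ u ∈ Finset.univ.filter (fun u => Sum.inl u ∈ S),
               ∑ v ∈ Finset.univ.filter (fun v => Sum.inr v ∈ S), w u v) /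
        ((∑ u ∈ Finset.univ.filter (fun u => Sum.inl u ∈ S), ∑ v, w u v) +
          ∑ v ∈ Finset.univ.filter (fun v => Sum.inr v ∈ S), ∑ u, w u v) =
      (∑ a ∈ S, ∑ b ∈ Sᶜ, coverW w a b) / (∑ a ∈ S, ∑ b, coverW w a b) :=
  flow_ratio_of_simple_set_general w S hvol
end

section
/- Let H be an undirected weighted graph and let S \subseteq V be partitioned into S_1 and S_2. If 2 w_H(S_1, S_2) \le c \cdot (w_H(S_1, \bar{S_1}) + w_H(S_2, \bar{S_2})) for some constant c < 1, then \phi_H(S) \ge (1-c) \cdot min{\phi_H(S_1), \phi_H(S_2)}. -/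
open Finset

/-- Total weight of edges between two vertex sets. -/
def cutW {V : Type*} (w : V → V → ℝ) (X Y : Finset V) : ℝ :=
  ∑ u ∈ X, ∑ v ∈ Y, w u v

/-- Volume of a vertex set: sum of weighted degrees. -/
def volW {V : Type*} [Fintype V] (w : V → V → ℝ) (S : Finset V) : ℝ :=
  ∑ u ∈ S, ∑ v, w u v

/-- Conductance of a vertex set. -/
noncomputable def phiW {V : Type*} [Fintype V] [DecidableEq V]
    (w : V → V → ℝ) (S : Finset V) : ℝ :=
  cutW w S Sᶜ / volW w S

/-!
Write `a = w(S₁, S̄)`, `b = w(S₂, S̄)` and `x = w(S₁, S₂)`, so that `w(S₁, S̄₁) = a + x`,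
`w(S₂, S̄₂) = b + x` and `w(S, S̄) = a + b`. With `m = min {φ(S₁), φ(S₂)}` we get
`m · vol(S) ≤ w(S₁, S̄₁) + w(S₂, S̄₂) =: T`, and the hypothesis `2x ≤ c T` gives
`(1 - c) T ≤ T - 2x = w(S, S̄)`.
-/

section Cut

variable {V : Type*} (w : V → V → ℝ)

lemma cutW_union_left [DecidableEq V] {X Y : Finset V} (h : Disjoint X Y) (Z : Finset V) :
    cutW w (X ∪ Y) Z = cutW w X Z + cutW w Y Z := by
  simp only [cutW, sum_union h]

lemma cutW_union_right [DecidableEq V] (X : Finset V) {Y Z : Finset V} (h : Disjoint Y Z) :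
    cutW w X (Y ∪ Z) = cutW w X Y + cutW w X Z := by
  simp only [cutW, sum_union h, sum_add_distrib]

lemma cutW_comm (hsym : ∀ u v, w u v = w v u) (X Y : Finset V) :
    cutW w X Y = cutW w Y X := by
  rw [cutW, sum_comm]
  exact sum_congr rfl fun v _ => sum_congr rfl fun u _ => hsym u v

lemma volW_union [Fintype V] [DecidableEq V] {X Y : Finset V} (h : Disjoint X Y) :
    volW w (X ∪ Y) = volW w X + volW w Y :=
  sum_union h

lemma mul_volW_le_cutW_of_le_phiW [Fintype V] [DecidableEq V] {S : Finset V} {m : ℝ}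
    (hvol : 0 < volW w S) (hm : m ≤ phiW w S) : m * volW w S ≤ cutW w S Sᶜ :=
  (le_div_iff₀ hvol).1 hm

end Cut

lemma Finset.compl_eq_compl_union_union_of_disjoint {α : Type*} [Fintype α] [DecidableEq α]
    {s t : Finset α} (h : Disjoint s t) : sᶜ = (s ∪ t)ᶜ ∪ t := by
  ext x
  have := fun hs : x ∈ s => disjoint_left.1 h hs
  simp only [mem_compl, mem_union]
  tauto

lemma cutW_union_compl {V : Type*} [Fintype V] [DecidableEq V] (w : V → V → ℝ)
    (hsym : ∀ u v, w u v = w v u) {S₁ S₂ : Finset V} (hdisj : Disjoint S₁ S₂) :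
    cutW w (S₁ ∪ S₂) (S₁ ∪ S₂)ᶜ =
      cutW w S₁ S₁ᶜ + cutW w S₂ S₂ᶜ - 2 * cutW w S₁ S₂ := by
  have hdisj₁ : Disjoint (S₁ ∪ S₂)ᶜ S₂ := disjoint_compl_left.mono_right subset_union_right
  have hdisj₂ : Disjoint (S₂ ∪ S₁)ᶜ S₁ := disjoint_compl_left.mono_right subset_union_right
  rw [compl_eq_compl_union_union_of_disjoint hdisj,
    compl_eq_compl_union_union_of_disjoint hdisj.symm, cutW_union_right w _ hdisj₁,
    cutW_union_right w _ hdisj₂, union_comm S₂ S₁, cutW_union_left w hdisj,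
    cutW_comm w hsym S₂ S₁]
  ring

theorem conductance_union_lower_bound_general
    {V : Type*} [Fintype V] [DecidableEq V]
    (w : V → V → ℝ) (hsym : ∀ u v, w u v = w v u)
    (S₁ S₂ : Finset V) (hdisj : Disjoint S₁ S₂)
    (hv1 : 0 < volW w S₁) (hv2 : 0 < volW w S₂)
    (c : ℝ) (hc : c < 1)
    (h : 2 * cutW w S₁ S₂ ≤ c * (cutW w S₁ S₁ᶜ + cutW w S₂ S₂ᶜ)) :
    (1 - c) * min (phiW w S₁) (phiW w S₂) ≤ phiW w (S₁ ∪ S₂) := by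
  set m := min (phiW w S₁) (phiW w S₂)
  have h₁ := mul_volW_le_cutW_of_le_phiW w hv1 (min_le_left _ _ : m ≤ _)
  have h₂ := mul_volW_le_cutW_of_le_phiW w hv2 (min_le_right _ _ : m ≤ _)
  rw [phiW, le_div_iff₀ (by rw [volW_union w hdisj]; positivity), cutW_union_compl w hsym hdisj,
    volW_union w hdisj]
  calc (1 - c) * m * (volW w S₁ + volW w S₂)
      = (1 - c) * (m * volW w S₁ + m * volW w S₂) := by ring
    _ ≤ (1 - c) * (cutW w S₁ S₁ᶜ + cutW w S₂ S₂ᶜ) :=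
        mul_le_mul_of_nonneg_left (add_le_add h₁ h₂) (sub_nonneg.2 hc.le)
    _ ≤ cutW w S₁ S₁ᶜ + cutW w S₂ S₂ᶜ - 2 * cutW w S₁ S₂ := by linarith

/-- If `S` is partitioned into `S₁` and `S₂` and
`2 w_H(S₁,S₂) ≤ c (w_H(S₁,∂S₁) + w_H(S₂,∂S₂))` for a constant `c < 1`, then
`φ_H(S) ≥ (1-c) · min{φ_H(S₁), φ_H(S₂)}`. -/
theorem conductance_union_lower_bound
    {V : Type*} [Fintype V] [DecidableEq V]
    (w : V → V → ℝ) (hsym : ∀ u v, w u v = w v u) (hnn : ∀ u v, 0 ≤ w u v)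
    (S₁ S₂ : Finset V) (hdisj : Disjoint S₁ S₂)
    (hv1 : 0 < volW w S₁) (hv2 : 0 < volW w S₂)
    (c : ℝ) (hc : c < 1)
    (h : 2 * cutW w S₁ S₂ ≤ c * (cutW w S₁ S₁ᶜ + cutW w S₂ S₂ᶜ)) :
    (1 - c) * min (phiW w S₁) (phiW w S₂) ≤ phiW w (S₁ ∪ S₂) :=
  conductance_union_lower_bound_general w hsym S₁ S₂ hdisj hv1 hv2 c hc h
end
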